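/- arXiv:1802.10291 — 8 statements merged into one kernel-verified Lean document; each statement's English description precedes it below -/
import Mathlib

section
/- Under the MCI setup, suppose H_n is invertible for every n ∈ I_1. Then every bandlimited signal f(t) = Σ_{n∈I^N} a(n) e^{int} (a : ℤ → ℂ supported in I^N) satisfies, for all t ∈ ℝ, f(t) = (1/L) Σ_{m=1}^{M} Σ_{p=0}^{L−1} g_m(t_p) y_m(t − t_p), where t_p = 2πp/L and g_m(t) = Σ_{n∈I^N} a(n) b_m(n) e^{int}. -/
/-!
Expanding `g_m` and `y_m`, the sum over the sample points `t_p = 2πp/L` turns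
`e^{i(ν-n)t_p}` into `L·[L ∣ ν - n]`, so only pairs of frequencies in one residue class
mod `L` survive. Writing such a pair as `ν = n₀ + jL`, `n = n₀ + kL` with `n₀ ∈ I_1`,
`Σ_m b_m(ν) r_m(n)` is the `(j, k)` entry of `H_{n₀} H_{n₀}⁻¹ = 1`, i.e. `δ_{νn}`,
and what is left is `f(t)`.
-/

open Real

theorem IsPrimitiveRoot.sum_range_zpow_pow_eq_ite {K : Type*} [Field K] {ζ : K} {L : ℕ}
    (hζ : IsPrimitiveRoot ζ L) (d : ℤ) :
    ∑ p ∈ Finset.range L, (ζ ^ d) ^ p = if (L : ℤ) ∣ d then (L : K) else 0 := by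
  split_ifs with hd
  · simp [(hζ.zpow_eq_one_iff_dvd d).2 hd]
  · rw [geom_sum_eq (mt (hζ.zpow_eq_one_iff_dvd d).1 hd), ← zpow_natCast, ← zpow_mul, mul_comm,
      zpow_mul, hζ.zpow_eq_one, one_zpow, sub_self, zero_div]

namespace Complex

theorem sum_range_exp_two_pi_mul_div_eq_ite {L : ℕ} (hL : L ≠ 0) (d : ℤ) :
    ∑ p ∈ Finset.range L, exp (I * d * ((2 * π * p / L : ℝ) : ℂ))
      = if (L : ℤ) ∣ d then (L : ℂ) else 0 := by
  rw [← (isPrimitiveRoot_exp L hL).sum_range_zpow_pow_eq_ite d]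
  refine Finset.sum_congr rfl fun p _ => ?_
  rw [← exp_int_mul, ← exp_nat_mul]
  push_cast
  ring_nf

theorem exp_mul_exp_sub (ν n : ℤ) (s t : ℝ) :
    exp (I * ν * s) * exp (I * n * ((t - s : ℝ) : ℂ))
      = exp (I * n * t) * exp (I * (ν - n : ℤ) * s) := by
  rw [← exp_add, ← exp_add]
  push_cast
  ring_nf

theorem sum_range_sample_mul_shift_eq_sum_dvd {L : ℕ} (hL : L ≠ 0) (s : Finset ℤ) (α β : ℤ → ℂ) (t : ℝ) :
    ∑ p ∈ Finset.range L,
        (∑ ν ∈ s, α ν * exp (I * ν * ((2 * π * p / L : ℝ) : ℂ))) *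
          ∑ n ∈ s, β n * exp (I * n * ((t - 2 * π * p / L : ℝ) : ℂ))
      = L * ∑ ν ∈ s, ∑ n ∈ s,
          if (L : ℤ) ∣ ν - n then α ν * β n * exp (I * n * t) else 0 := by
  simp_rw [Finset.sum_mul_sum, Finset.mul_sum]
  rw [Finset.sum_comm]
  refine Finset.sum_congr rfl fun ν _ => ?_
  rw [Finset.sum_comm]
  refine Finset.sum_congr rfl fun n _ => ?_
  calc ∑ p ∈ Finset.range L, α ν * exp (I * ν * ((2 * π * p / L : ℝ) : ℂ)) *
          (β n * exp (I * n * ((t - 2 * π * p / L : ℝ) : ℂ)))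
      = α ν * β n * exp (I * n * t) *
          ∑ p ∈ Finset.range L, exp (I * (ν - n : ℤ) * ((2 * π * p / L : ℝ) : ℂ)) := by
        rw [Finset.mul_sum]
        refine Finset.sum_congr rfl fun p _ => ?_
        rw [mul_mul_mul_comm, exp_mul_exp_sub]
        ring
    _ = _ := by
        rw [sum_range_exp_two_pi_mul_div_eq_ite hL]
        split_ifs <;> ring

end Complex

section BlockIndex

variable {N₁ N₂ : ℤ} {L M : ℕ}

theorem exists_fin_eq_add_mul_of_dvd (hNML : N₂ - N₁ + 1 = (L : ℤ) * M) {n₀ ν : ℤ}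
    (h₀ : N₁ ≤ n₀) (h₀' : n₀ ≤ N₁ + L - 1) (hν : ν ∈ Finset.Icc N₁ N₂) (hdvd : (L : ℤ) ∣ ν - n₀) :
    ∃ j : Fin M, ν = n₀ + (j : ℤ) * L := by
  obtain ⟨c, hc⟩ := hdvd
  rw [Finset.mem_Icc] at hν
  have hc₀ : 0 ≤ c := by
    by_contra! h
    nlinarith
  have hcM : c < M := by
    by_contra! h
    nlinarith
  exact ⟨⟨c.toNat, by omega⟩, by simp only [Int.toNat_of_nonneg hc₀]; linarith⟩

theorem sum_mul_eq_ite_of_dvd (hNML : N₂ - N₁ + 1 = (L : ℤ) * M) (hL : 0 < L)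
    {b r : Fin M → ℤ → ℂ}
    (hbr : ∀ n₀ : ℤ, N₁ ≤ n₀ → n₀ ≤ N₁ + L - 1 → ∀ j k : Fin M,
      ∑ m, b m (n₀ + (j : ℤ) * L) * r m (n₀ + (k : ℤ) * L) = if j = k then 1 else 0)
    {ν n : ℤ} (hν : ν ∈ Finset.Icc N₁ N₂) (hn : n ∈ Finset.Icc N₁ N₂) (hdvd : (L : ℤ) ∣ ν - n) :
    ∑ m, b m ν * r m n = if ν = n then 1 else 0 := by
  have hL' : (0 : ℤ) < L := by exact_mod_cast hL
  obtain ⟨n₀, h₀, h₀', hn₀⟩ : ∃ n₀, N₁ ≤ n₀ ∧ n₀ ≤ N₁ + L - 1 ∧ (L : ℤ) ∣ n - n₀ :=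
    ⟨N₁ + (n - N₁) % L, by linarith [Int.emod_nonneg (n - N₁) hL'.ne'],
      by linarith [Int.emod_lt_of_pos (n - N₁) hL'],
      by convert Int.dvd_self_sub_emod (x := n - N₁) (m := L) using 1; ring⟩
  obtain ⟨j, rfl⟩ := exists_fin_eq_add_mul_of_dvd hNML h₀ h₀' hν (by simpa using dvd_add hdvd hn₀)
  obtain ⟨k, rfl⟩ := exists_fin_eq_add_mul_of_dvd hNML h₀ h₀' hn hn₀
  rw [hbr n₀ h₀ h₀' j k]
  refine if_congr ⟨fun h => by rw [h], fun h => Fin.ext ?_⟩ rfl rfl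
  exact_mod_cast mul_right_cancel₀ hL'.ne' (add_left_cancel h)

end BlockIndex

theorem mci_reconstruction_general
    (N₁ N₂ : ℤ) (M L : ℕ) (hL : 0 < L)
    (hNML : N₂ - N₁ + 1 = (L : ℤ) * (M : ℤ))
    (b : Fin M → ℤ → ℂ)
    (H : ℤ → Matrix (Fin M) (Fin M) ℂ)
    (hH : ∀ n : ℤ, H n = Matrix.of fun j k : Fin M => b k (n + (j : ℤ) * (L : ℤ)))
    (hinv : ∀ n : ℤ, N₁ ≤ n → n ≤ N₁ + (L : ℤ) - 1 → IsUnit (H n))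
    (r : Fin M → ℤ → ℂ)
    (hr1 : ∀ (m : Fin M) (n : ℤ), N₁ ≤ n → n ≤ N₁ + (L : ℤ) - 1 →
      ∀ k : Fin M, r m (n + (k : ℤ) * (L : ℤ)) = (H n)⁻¹ m k)
    (y : Fin M → ℝ → ℂ)
    (hy : ∀ (m : Fin M) (t : ℝ),
      y m t = ∑ n ∈ Finset.Icc N₁ N₂, r m n * Complex.exp (Complex.I * (n : ℂ) * (t : ℂ)))
    (a : ℤ → ℂ)
    (f : ℝ → ℂ)
    (hf : ∀ t : ℝ,
      f t = ∑ n ∈ Finset.Icc N₁ N₂, a n * Complex.exp (Complex.I * (n : ℂ) * (t : ℂ)))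
    (g : Fin M → ℝ → ℂ)
    (hg : ∀ (m : Fin M) (t : ℝ),
      g m t = ∑ n ∈ Finset.Icc N₁ N₂, a n * b m n * Complex.exp (Complex.I * (n : ℂ) * (t : ℂ))) :
    ∀ t : ℝ, f t = (1 / (L : ℂ)) * ∑ m : Fin M, ∑ p ∈ Finset.range L,
      g m (2 * π * p / L) * y m (t - 2 * π * p / L) := by
  intro t
  have hbr : ∀ n₀ : ℤ, N₁ ≤ n₀ → n₀ ≤ N₁ + L - 1 → ∀ j k : Fin M,
      ∑ m, b m (n₀ + (j : ℤ) * L) * r m (n₀ + (k : ℤ) * L) = if j = k then 1 else 0 := by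
    intro n₀ h₀ h₀' j k
    have hdet := (Matrix.isUnit_iff_isUnit_det _).1 (hinv n₀ h₀ h₀')
    calc _ = (H n₀ * (H n₀)⁻¹) j k := by
          simp only [Matrix.mul_apply, hr1 _ n₀ h₀ h₀', hH n₀, Matrix.of_apply]
      _ = _ := by rw [Matrix.mul_nonsing_inv _ hdet, Matrix.one_apply]
  have hLC : (L : ℂ) ≠ 0 := Nat.cast_ne_zero.mpr hL.ne'
  rw [hf]
  symm
  calc _ = ∑ m : Fin M, ∑ ν ∈ Finset.Icc N₁ N₂, ∑ n ∈ Finset.Icc N₁ N₂,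
        if (L : ℤ) ∣ ν - n then a ν * b m ν * r m n * Complex.exp (Complex.I * n * t) else 0 := by
        simp_rw [hg, hy, Complex.sum_range_sample_mul_shift_eq_sum_dvd hL.ne']
        rw [← Finset.mul_sum, ← mul_assoc, one_div_mul_cancel hLC, one_mul]
    _ = ∑ ν ∈ Finset.Icc N₁ N₂, ∑ n ∈ Finset.Icc N₁ N₂,
        if (L : ℤ) ∣ ν - n then a ν * (∑ m, b m ν * r m n) * Complex.exp (Complex.I * n * t)
        else 0 := by
        rw [Finset.sum_comm]
        refine Finset.sum_congr rfl fun ν _ => ?_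
        rw [Finset.sum_comm]
        refine Finset.sum_congr rfl fun n _ => ?_
        rw [Finset.sum_ite_irrel, Finset.sum_const_zero, Finset.mul_sum, Finset.sum_mul]
        exact if_congr Iff.rfl (Finset.sum_congr rfl fun m _ => by ring) rfl
    _ = ∑ ν ∈ Finset.Icc N₁ N₂, ∑ n ∈ Finset.Icc N₁ N₂,
        if ν = n then a n * Complex.exp (Complex.I * n * t) else 0 := by
        refine Finset.sum_congr rfl fun ν hν => Finset.sum_congr rfl fun n hn => ?_
        by_cases hd : (L : ℤ) ∣ ν - n
        · rw [if_pos hd, sum_mul_eq_ite_of_dvd hNML hL hbr hν hn hd]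
          split_ifs with he <;> simp [he]
        · rw [if_neg hd, if_neg]
          rintro rfl
          simp at hd
    _ = _ := Finset.sum_congr rfl fun ν hν => by rw [Finset.sum_ite_eq, if_pos hν]

/-- MCI reconstruction theorem (Theorem 3.1): a bandlimited signal
`f(t) = Σ_{n∈I^N} a(n) e^{int}` is exactly reconstructed from the samples of the
channel outputs `g_m` via the interpolation functions `y_m`. -/
theorem mci_reconstruction
    (N₁ N₂ : ℤ) (M L : ℕ) (hM : 0 < M) (hL : 0 < L)
    (hNML : N₂ - N₁ + 1 = (L : ℤ) * (M : ℤ))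
    (b : Fin M → ℤ → ℂ)
    (H : ℤ → Matrix (Fin M) (Fin M) ℂ)
    (hH : ∀ n : ℤ, H n = Matrix.of fun j k : Fin M => b k (n + (j : ℤ) * (L : ℤ)))
    (hinv : ∀ n : ℤ, N₁ ≤ n → n ≤ N₁ + (L : ℤ) - 1 → IsUnit (H n))
    (r : Fin M → ℤ → ℂ)
    (hr1 : ∀ (m : Fin M) (n : ℤ), N₁ ≤ n → n ≤ N₁ + (L : ℤ) - 1 →
      ∀ k : Fin M, r m (n + (k : ℤ) * (L : ℤ)) = (H n)⁻¹ m k)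
    (hr0 : ∀ (m : Fin M) (n : ℤ), n < N₁ ∨ N₂ < n → r m n = 0)
    (y : Fin M → ℝ → ℂ)
    (hy : ∀ (m : Fin M) (t : ℝ),
      y m t = ∑ n ∈ Finset.Icc N₁ N₂, r m n * Complex.exp (Complex.I * (n : ℂ) * (t : ℂ)))
    (a : ℤ → ℂ) (ha : ∀ n : ℤ, n < N₁ ∨ N₂ < n → a n = 0)
    (f : ℝ → ℂ)
    (hf : ∀ t : ℝ,
      f t = ∑ n ∈ Finset.Icc N₁ N₂, a n * Complex.exp (Complex.I * (n : ℂ) * (t : ℂ)))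
    (g : Fin M → ℝ → ℂ)
    (hg : ∀ (m : Fin M) (t : ℝ),
      g m t = ∑ n ∈ Finset.Icc N₁ N₂, a n * b m n * Complex.exp (Complex.I * (n : ℂ) * (t : ℂ))) :
    ∀ t : ℝ, f t = (1 / (L : ℂ)) * ∑ m : Fin M, ∑ p ∈ Finset.range L,
      g m (2 * π * p / L) * y m (t - 2 * π * p / L) :=
  mci_reconstruction_general N₁ N₂ M L hL hNML b H hH hinv r hr1 y hy a f hf g hg
end

section
/- Under the MCI setup with H_n invertible for every n ∈ I_1, define v_{m,n}(t) = Σ_{k=1}^{M} q_{mk}(n) e^{i(n+kL−L)t} for n ∈ I_1, and the row vector Ṽ_m(t) = [v_{m,N₁}(t), v_{m,N₁+1}(t), …, v_{m,N₁+L−1}(t)]. Then for every t ∈ ℝ, [y_m(t−t_0), y_m(t−t_1), …, y_m(t−t_{L−1})] = Ṽ_m(t) · F_L · U_L, where F_L is the L×L DFT matrix with entries (F_L)_{pq} = ω^{pq} (ω = e^{−2πi/L}, 0 ≤ p,q ≤ L−1) and U_L = diag(ω^{0·N₁}, ω^{1·N₁}, …, ω^{(L−1)·N₁}). Equivalently,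 y_m(t − t_p) = Σ_{n∈I_1} v_{m,n}(t) e^{−in t_p} for 0 ≤ p ≤ L−1. -/
/-!
Write `n ∈ I^N` as `n = j + kL` with `j ∈ I_1`, `0 ≤ k < M`. Since `e^{-ikL t_p} = e^{-2πikp} = 1`,
the phase `e^{-in t_p}` only depends on `j`, so the sum defining `y_m(t - t_p)` regroups by `j`
into `Σ_j v_{m,j}(t) e^{-ij t_p}`. Finally `e^{-i(N₁+q) t_p} = ω^{qp} ω^{pN₁}` is the `(q, p)` entry
of `F_L U_L`.
-/

open Real
open Finset
open Complex (I)
open scoped Complex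

theorem Finset.sum_Icc_int_eq_sum_fin {β : Type*} [AddCommMonoid β] (f : ℤ → β) (a : ℤ) (N : ℕ) :
    ∑ n ∈ Icc a (a + N - 1), f n = ∑ i : Fin N, f (a + i) := by
  rw [Fin.sum_univ_eq_sum_range (fun i => f (a + i))]
  refine (sum_nbij' (fun i : ℕ => a + i) (fun n : ℤ => (n - a).toNat) ?_ ?_ ?_ ?_ ?_).symm <;>
    intro x hx <;> simp only [mem_range, mem_Icc] at hx ⊢ <;> omega

theorem Fin.sum_univ_mul_eq_sum_sum {β : Type*} [AddCommMonoid β] (M L : ℕ) (g : ℕ → β) :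
    ∑ i : Fin (M * L), g i = ∑ j : Fin L, ∑ k : Fin M, g (j + L * k) := by
  rw [← finProdFinEquiv.sum_comp, Fintype.sum_prod_type, sum_comm]
  rfl

theorem exp_I_mul_add_mul_sub_two_pi_div {L : ℕ} (hL : L ≠ 0) (j k : ℤ) (p : ℕ) (t : ℝ) :
    cexp (I * ((j + k * L : ℤ) : ℂ) * ((t - 2 * π * p / L : ℝ) : ℂ)) =
      cexp (I * (j + k * L) * t) * cexp (-I * j * ((2 * π * p / L : ℝ) : ℂ)) := by
  have hperiod : I * ((j + k * L : ℤ) : ℂ) * ((t - 2 * π * p / L : ℝ) : ℂ) =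
      I * (j + k * L) * t + -I * j * ((2 * π * p / L : ℝ) : ℂ) +
        (-(k * p) : ℤ) * (2 * π * I) := by
    push_cast
    field_simp
    ring
  rw [hperiod, Complex.exp_add, Complex.exp_int_mul_two_pi_mul_I, mul_one, Complex.exp_add]

theorem sum_Icc_mul_exp_shift_eq_sum_fin_blocks (c : ℤ → ℂ) (a : ℤ) {L : ℕ} (hL : L ≠ 0)
    (M p : ℕ) (t : ℝ) :
    ∑ n ∈ Icc a (a + (M * L : ℕ) - 1), c n * cexp (I * n * ((t - 2 * π * p / L : ℝ) : ℂ)) =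
      ∑ j : Fin L, (∑ k : Fin M, c (a + j + k * L) * cexp (I * ((a + j : ℤ) + k * L) * t)) *
        cexp (-I * (a + j : ℤ) * ((2 * π * p / L : ℝ) : ℂ)) := by
  rw [sum_Icc_int_eq_sum_fin, Fin.sum_univ_mul_eq_sum_sum (g := fun i =>
    c (a + i) * cexp (I * (a + i : ℤ) * ((t - 2 * π * p / L : ℝ) : ℂ)))]
  refine sum_congr rfl fun j _ => ?_
  rw [sum_mul]
  refine sum_congr rfl fun k _ => ?_
  have hidx : a + ((j + L * k : ℕ) : ℤ) = (a + j : ℤ) + (k : ℤ) * L := by push_cast; ring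
  rw [hidx, exp_I_mul_add_mul_sub_two_pi_div hL]
  push_cast
  ring

theorem exp_neg_I_mul_two_pi_div_eq_pow {L : ℕ} (hL : L ≠ 0) (a : ℤ) (q p : ℕ) :
    cexp (-I * ((a + q : ℤ) : ℂ) * ((2 * π * p / L : ℝ) : ℂ)) =
      cexp (-(2 * π * I) / L) ^ (q * p) * cexp (-(2 * π * I) / L) ^ ((p : ℤ) * a) := by
  rw [← Complex.exp_nat_mul, ← Complex.exp_int_mul, ← Complex.exp_add]
  congr 1
  push_cast
  field_simp
  ring

theorem mci_shifted_interpolants_matrix_representation_general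
    (N₁ N₂ : ℤ) (M L : ℕ)
    (hNML : N₂ - N₁ + 1 = (L : ℤ) * (M : ℤ))
    (H : ℤ → Matrix (Fin M) (Fin M) ℂ)
    (r : Fin M → ℤ → ℂ)
    (hr1 : ∀ (m : Fin M) (n : ℤ), N₁ ≤ n → n ≤ N₁ + (L : ℤ) - 1 →
      ∀ k : Fin M, r m (n + (k : ℤ) * (L : ℤ)) = (H n)⁻¹ m k)
    (y : Fin M → ℝ → ℂ)
    (hy : ∀ (m : Fin M) (t : ℝ),
      y m t = ∑ n ∈ Finset.Icc N₁ N₂, r m n * Complex.exp (Complex.I * (n : ℂ) * (t : ℂ)))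
    (v : Fin M → ℤ → ℝ → ℂ)
    (hv : ∀ (m : Fin M) (n : ℤ) (t : ℝ),
      v m n t = ∑ k : Fin M,
        (H n)⁻¹ m k * Complex.exp (Complex.I * ((n : ℂ) + (k : ℂ) * (L : ℂ)) * (t : ℂ)))
    (ω : ℂ) (hω : ω = Complex.exp (-(2 * (π : ℂ) * Complex.I) / (L : ℂ)))
    (F U : Matrix (Fin L) (Fin L) ℂ)
    (hF : ∀ p q : Fin L, F p q = ω ^ ((p : ℕ) * (q : ℕ)))
    (hU : U = Matrix.diagonal fun p : Fin L => ω ^ ((p : ℤ) * N₁))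
    (m : Fin M) :
    ∀ t : ℝ,
      ((Matrix.of fun (_ : Fin 1) (p : Fin L) => y m (t - 2 * π * p / L)) =
        (Matrix.of fun (_ : Fin 1) (q : Fin L) => v m (N₁ + (q : ℤ)) t) * F * U) ∧
      (∀ p : Fin L, y m (t - 2 * π * p / L) =
        ∑ n ∈ Finset.Icc N₁ (N₁ + (L : ℤ) - 1),
          v m n t * Complex.exp (-Complex.I * (n : ℂ) * ((2 * π * p / L : ℝ) : ℂ))) := by
  intro t
  have hIcc : Icc N₁ N₂ = Icc N₁ (N₁ + (M * L : ℕ) - 1) := by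
    congr 1; push_cast; linarith
  have hfold : ∀ p : Fin L, y m (t - 2 * π * p / L) = ∑ q : Fin L,
      v m (N₁ + q) t * cexp (-I * (N₁ + q : ℤ) * ((2 * π * p / L : ℝ) : ℂ)) := by
    intro p
    rw [hy, hIcc, sum_Icc_mul_exp_shift_eq_sum_fin_blocks _ _ p.pos.ne' M p]
    refine sum_congr rfl fun q _ => ?_
    rw [hv]
    congr 1
    refine sum_congr rfl fun k _ => ?_
    rw [hr1 m _ (by omega) (by omega)]
  refine ⟨?_, fun p => by rw [hfold, sum_Icc_int_eq_sum_fin]⟩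
  ext _ p
  rw [hU, Matrix.mul_diagonal, Matrix.mul_apply, Matrix.of_apply, hfold, sum_mul]
  refine sum_congr rfl fun q _ => ?_
  rw [exp_neg_I_mul_two_pi_div_eq_pow p.pos.ne', Matrix.of_apply, hF, hω]
  ring

/-- Lemma 3.2: matrix representation of the shifted interpolation functions
`y_m(t - t_p)` in terms of the DFT matrix, and the equivalent pointwise identity
`y_m(t - t_p) = Σ_{n∈I_1} v_{m,n}(t) e^{-i n t_p}`. -/
theorem mci_shifted_interpolants_matrix_representation
    (N₁ N₂ : ℤ) (M L : ℕ) (hM : 0 < M) (hL : 0 < L)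
    (hNML : N₂ - N₁ + 1 = (L : ℤ) * (M : ℤ))
    (b : Fin M → ℤ → ℂ)
    (H : ℤ → Matrix (Fin M) (Fin M) ℂ)
    (hH : ∀ n : ℤ, H n = Matrix.of fun j k : Fin M => b k (n + (j : ℤ) * (L : ℤ)))
    (hinv : ∀ n : ℤ, N₁ ≤ n → n ≤ N₁ + (L : ℤ) - 1 → IsUnit (H n))
    (r : Fin M → ℤ → ℂ)
    (hr1 : ∀ (m : Fin M) (n : ℤ), N₁ ≤ n → n ≤ N₁ + (L : ℤ) - 1 →
      ∀ k : Fin M, r m (n + (k : ℤ) * (L : ℤ)) = (H n)⁻¹ m k)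
    (hr0 : ∀ (m : Fin M) (n : ℤ), n < N₁ ∨ N₂ < n → r m n = 0)
    (y : Fin M → ℝ → ℂ)
    (hy : ∀ (m : Fin M) (t : ℝ),
      y m t = ∑ n ∈ Finset.Icc N₁ N₂, r m n * Complex.exp (Complex.I * (n : ℂ) * (t : ℂ)))
    (v : Fin M → ℤ → ℝ → ℂ)
    (hv : ∀ (m : Fin M) (n : ℤ) (t : ℝ),
      v m n t = ∑ k : Fin M,
        (H n)⁻¹ m k * Complex.exp (Complex.I * ((n : ℂ) + (k : ℂ) * (L : ℂ)) * (t : ℂ)))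
    (ω : ℂ) (hω : ω = Complex.exp (-(2 * (π : ℂ) * Complex.I) / (L : ℂ)))
    (F U : Matrix (Fin L) (Fin L) ℂ)
    (hF : ∀ p q : Fin L, F p q = ω ^ ((p : ℕ) * (q : ℕ)))
    (hU : U = Matrix.diagonal fun p : Fin L => ω ^ ((p : ℤ) * N₁))
    (m : Fin M) :
    ∀ t : ℝ,
      ((Matrix.of fun (_ : Fin 1) (p : Fin L) => y m (t - 2 * π * p / L)) =
        (Matrix.of fun (_ : Fin 1) (q : Fin L) => v m (N₁ + (q : ℤ)) t) * F * U) ∧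
      (∀ p : Fin L, y m (t - 2 * π * p / L) =
        ∑ n ∈ Finset.Icc N₁ (N₁ + (L : ℤ) - 1),
          v m n t * Complex.exp (-Complex.I * (n : ℂ) * ((2 * π * p / L : ℝ) : ℂ))) :=
  mci_shifted_interpolants_matrix_representation_general N₁ N₂ M L hNML H r hr1 y hy v hv ω hω F U
    hF hU m
end

section
/- Let N₀ be a natural number, N = 3N₀ + 1, L = 2N₀ + 1, and I_1 = {n ∈ ℤ : −N ≤ n ≤ −N + L − 1}. For n ∈ I_1 define v_{1,n}(t) = ((2L² + 3Ln + n²)/(2L²)) e^{int} − (n(2L+n)/L²) e^{i(n+L)t} + (n(L+n)/(2L²)) e^{i(n+2L)t}, v_{2,n}(t) = (i(3L+2n)/(2L²)) e^{int} − (2i(L+n)/L²) e^{i(n+L)t} + (i(L+2n)/(2L²)) e^{i(n+2L)t}, and v_{3,n}(t) = (−1/(2L²)) e^{int} + (1/L²) e^{i(n+L)t} − (1/(2L²)) e^{i(n+2L)t}, and set y_m(t) = Σ_{n∈I_1} v_{m,n}(t) for m = 1,2,3. Then every trigonometric polynomial f(t) = Σ_{n=−N}^{N} a(n) e^{int} (a(n)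 ∈ ℂ) satisfies, for all t ∈ ℝ, f(t) = (1/L) Σ_{p=0}^{L−1} [ f(t_p) y₁(t−t_p) + f'(t_p) y₂(t−t_p) + f''(t_p) y₃(t−t_p) ], where t_p = 2πp/L and f', f'' are the first and second derivatives of f. -/
/-!
Sampling `e^{int}` and its first two derivatives multiplies the kernels `v₁, v₂, v₃` by
`1, in, -n²`, and the combination `v₁ k + in v₂ k - n² v₃ k` is `∑ⱼ ℓⱼ(n - k) e^{i(k + jL)t}`,
where `ℓ₀, ℓ₁, ℓ₂` is the Lagrange basis for the nodes `0, L, 2L`. Averaging over the `L` sample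
points `tₚ = 2πp/L` annihilates every term with `L ∤ n - k`. Since `2N + 1 = 3L`, every `|n| ≤ N`
has exactly one `k ∈ I₁` with `L ∣ n - k`, and then `n - k ∈ {0, L, 2L}` is a node, so the Lagrange
basis returns `e^{int}`. The formula for `f` follows by linearity.
-/

open Real Finset

noncomputable def expI (μ : ℂ) (t : ℝ) : ℂ := Complex.exp (Complex.I * μ * t)

theorem expI_mul_expI_sub (μ ν : ℂ) (s t : ℝ) :
    expI μ s * expI ν (t - s) = expI ν t * expI (μ - ν) s := by
  simp only [expI, ← Complex.exp_add]
  push_cast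
  ring_nf

theorem sum_expI_samples {L : ℕ} (hL : L ≠ 0) (m : ℤ) :
    ∑ p ∈ range L, expI m (2 * π * p / L) = if (L : ℤ) ∣ m then (L : ℂ) else 0 := by
  set ζ := Complex.exp (2 * π * Complex.I / L)
  have hζ : IsPrimitiveRoot ζ L := Complex.isPrimitiveRoot_exp L hL
  have hpow : ∀ p : ℕ, expI m (2 * π * p / L) = (ζ ^ m) ^ p := fun p => by
    rw [← Complex.exp_int_mul, ← Complex.exp_nat_mul, expI]
    push_cast
    ring_nf
  simp only [hpow]
  split_ifs with hdvd
  · simp [(hζ.zpow_eq_one_iff_dvd m).mpr hdvd]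
  · have hroot : (ζ ^ m) ^ L = 1 := by
      rw [← zpow_natCast, ← zpow_mul, mul_comm, zpow_mul, zpow_natCast, hζ.pow_eq_one, one_zpow]
    rw [geom_sum_eq (mt (hζ.zpow_eq_one_iff_dvd m).mp hdvd), hroot, sub_self, zero_div]

theorem dvd_sub_iff_eq_add_emod {L M n k : ℤ} (hk : k ∈ Icc M (M + L - 1)) :
    L ∣ n - k ↔ k = M + (n - M) % L := by
  rw [mem_Icc] at hk
  constructor
  · rintro ⟨c, hc⟩
    have hnM : n - M = (k - M) + L * c := by omega
    rw [hnM, Int.add_mul_emod_self_left, Int.emod_eq_of_lt (by omega) (by omega)]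
    omega
  · rintro rfl
    exact ⟨(n - M) / L, by rw [Int.emod_def]; ring⟩

theorem sum_Icc_ite_dvd_sub {β : Type*} [AddCommMonoid β] {L : ℤ} (hL : 0 < L) (M n : ℤ)
    (g : ℤ → β) :
    ∑ k ∈ Icc M (M + L - 1), (if L ∣ n - k then g k else 0) = g (M + (n - M) % L) := by
  rw [sum_congr rfl fun k hk => by rw [if_congr (dvd_sub_iff_eq_add_emod hk) rfl rfl], sum_ite_eq',
    if_pos]
  have h₀ := Int.emod_nonneg (n - M) hL.ne'
  have h₁ := Int.emod_lt_of_pos (n - M) hL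
  rw [mem_Icc]
  omega

noncomputable def lagrangeBasis (L x : ℂ) : Fin 3 → ℂ
  | 0 => (x - L) * (x - 2 * L) / (2 * L ^ 2)
  | 1 => -(x * (x - 2 * L)) / L ^ 2
  | 2 => x * (x - L) / (2 * L ^ 2)

theorem lagrangeBasis_node {L : ℂ} (hL : L ≠ 0) (i j : Fin 3) :
    lagrangeBasis L ((i : ℕ) * L) j = if j = i then 1 else 0 := by
  fin_cases i <;> fin_cases j <;> simp [lagrangeBasis] <;> field_simp <;> ring

theorem sum_lagrangeBasis_node_mul_expI {L : ℂ} (hL : L ≠ 0) (i : Fin 3) (k : ℂ) (t : ℝ) :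
    ∑ j, lagrangeBasis L ((i : ℕ) * L) j * expI (k + (j : ℕ) * L) t = expI (k + (i : ℕ) * L) t := by
  simp [lagrangeBasis_node hL]

noncomputable def sampleKernel₁ (L k : ℂ) (t : ℝ) : ℂ :=
  ((2 * L ^ 2 + 3 * L * k + k ^ 2) / (2 * L ^ 2)) * expI k t -
    (k * (2 * L + k) / L ^ 2) * expI (k + L) t + (k * (L + k) / (2 * L ^ 2)) * expI (k + 2 * L) t

noncomputable def sampleKernel₂ (L k : ℂ) (t : ℝ) : ℂ :=
  (Complex.I * (3 * L + 2 * k) / (2 * L ^ 2)) * expI k t -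
    (2 * Complex.I * (L + k) / L ^ 2) * expI (k + L) t +
    (Complex.I * (L + 2 * k) / (2 * L ^ 2)) * expI (k + 2 * L) t

noncomputable def sampleKernel₃ (L k : ℂ) (t : ℝ) : ℂ :=
  (-1 / (2 * L ^ 2)) * expI k t + (1 / L ^ 2) * expI (k + L) t -
    (1 / (2 * L ^ 2)) * expI (k + 2 * L) t

theorem sampleKernel_combination (L k n : ℂ) (t : ℝ) :
    sampleKernel₁ L k t + Complex.I * n * sampleKernel₂ L k t + -n ^ 2 * sampleKernel₃ L k t =
      ∑ j, lagrangeBasis L (n - k) j * expI (k + (j : ℕ) * L) t := by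
  simp only [sampleKernel₁, sampleKernel₂, sampleKernel₃, Fin.sum_univ_three, lagrangeBasis,
    Fin.val_zero, Fin.val_one, Fin.val_two, Nat.cast_zero, Nat.cast_one, Nat.cast_ofNat, zero_mul,
    one_mul, add_zero]
  linear_combination (n * (3 * L + 2 * k) / (2 * L ^ 2) * expI k t -
    2 * n * (L + k) / L ^ 2 * expI (k + L) t +
    n * (L + 2 * k) / (2 * L ^ 2) * expI (k + 2 * L) t) * Complex.I_sq

theorem sum_samples_expI_mul_lagrangeBasis {L : ℕ} (hL : L ≠ 0) (n k : ℤ) (t : ℝ) :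
    ∑ p ∈ range L, expI n (2 * π * p / L) *
        ∑ j, lagrangeBasis L (n - k) j * expI (k + (j : ℕ) * L) (t - 2 * π * p / L) =
      if (L : ℤ) ∣ n - k then L * ∑ j, lagrangeBasis L (n - k) j * expI (k + (j : ℕ) * L) t
      else 0 := by
  have hsamples : ∀ j : Fin 3, ∑ p ∈ range L, expI (n - (k + (j : ℕ) * L)) (2 * π * p / L) =
      if (L : ℤ) ∣ n - k then (L : ℂ) else 0 := fun j => by
    have hfreq : (n : ℂ) - (k + (j : ℕ) * L) = ((n - k - (j : ℕ) * L : ℤ) : ℂ) := by push_cast; ring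
    rw [hfreq, sum_expI_samples hL]
    simp_rw [dvd_sub_left (dvd_mul_left (L : ℤ) ((j : ℕ) : ℤ))]
  simp_rw [mul_sum, mul_left_comm (expI _ _), expI_mul_expI_sub]
  rw [sum_comm]
  simp_rw [← mul_assoc, ← mul_sum, hsamples]
  split_ifs
  · exact sum_congr rfl fun j _ => by ring
  · simp

theorem reconstruct_expI {L : ℕ} (hL : L ≠ 0) {M n : ℤ} (hn : n ∈ Icc M (M + 3 * L - 1)) (t : ℝ) :
    (1 / L) * ∑ p ∈ range L, ∑ k ∈ Icc M (M + L - 1), expI n (2 * π * p / L) *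
        ∑ j, lagrangeBasis L (n - k) j * expI (k + (j : ℕ) * L) (t - 2 * π * p / L) =
      expI n t := by
  have hLpos : (0 : ℤ) < L := by omega
  rw [mem_Icc] at hn
  rw [sum_comm]
  simp_rw [sum_samples_expI_mul_lagrangeBasis hL]
  rw [sum_Icc_ite_dvd_sub hLpos]
  obtain ⟨i, hi⟩ : ∃ i : Fin 3, n - (M + (n - M) % L) = (i : ℕ) * L := by
    have hq₀ : 0 ≤ (n - M) / L := Int.ediv_nonneg (by omega) hLpos.le
    have hq₃ : (n - M) / L < 3 := Int.ediv_lt_of_lt_mul hLpos (by omega)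
    refine ⟨⟨((n - M) / L).toNat, by omega⟩, ?_⟩
    rw [Int.emod_def]
    push_cast
    rw [Int.toNat_of_nonneg hq₀]
    ring
  have hiC : (n : ℂ) - ((M + (n - M) % L : ℤ) : ℂ) = (i : ℕ) * L := by exact_mod_cast hi
  rw [hiC, sum_lagrangeBasis_node_mul_expI (by exact_mod_cast hL), ← hiC, add_sub_cancel]
  field_simp

/-- Example 3.2: reconstruction of a trigonometric polynomial from the samples of
itself and of its first two derivatives (three-channel MCI with
`N = 3N₀+1`, `L = 2N₀+1`). -/
theorem mci_derivative_sampling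
    (N₀ : ℕ) (N L : ℕ) (hN : N = 3 * N₀ + 1) (hLdef : L = 2 * N₀ + 1)
    (a : ℤ → ℂ)
    (f fd fdd : ℝ → ℂ)
    (hf : ∀ t : ℝ, f t = ∑ n ∈ Finset.Icc (-(N : ℤ)) (N : ℤ),
      a n * Complex.exp (Complex.I * (n : ℂ) * (t : ℂ)))
    (hfd : ∀ t : ℝ, fd t = ∑ n ∈ Finset.Icc (-(N : ℤ)) (N : ℤ),
      (Complex.I * (n : ℂ)) * a n * Complex.exp (Complex.I * (n : ℂ) * (t : ℂ)))
    (hfdd : ∀ t : ℝ, fdd t = ∑ n ∈ Finset.Icc (-(N : ℤ)) (N : ℤ),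
      (-(n : ℂ) ^ 2) * a n * Complex.exp (Complex.I * (n : ℂ) * (t : ℂ)))
    (v₁ v₂ v₃ : ℤ → ℝ → ℂ)
    (hv₁ : ∀ (n : ℤ) (t : ℝ), v₁ n t =
      ((2 * (L : ℂ) ^ 2 + 3 * (L : ℂ) * (n : ℂ) + (n : ℂ) ^ 2) / (2 * (L : ℂ) ^ 2)) *
        Complex.exp (Complex.I * (n : ℂ) * (t : ℂ)) -
      ((n : ℂ) * (2 * (L : ℂ) + (n : ℂ)) / (L : ℂ) ^ 2) *
        Complex.exp (Complex.I * ((n : ℂ) + (L : ℂ)) * (t : ℂ)) +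
      ((n : ℂ) * ((L : ℂ) + (n : ℂ)) / (2 * (L : ℂ) ^ 2)) *
        Complex.exp (Complex.I * ((n : ℂ) + 2 * (L : ℂ)) * (t : ℂ)))
    (hv₂ : ∀ (n : ℤ) (t : ℝ), v₂ n t =
      (Complex.I * (3 * (L : ℂ) + 2 * (n : ℂ)) / (2 * (L : ℂ) ^ 2)) *
        Complex.exp (Complex.I * (n : ℂ) * (t : ℂ)) -
      (2 * Complex.I * ((L : ℂ) + (n : ℂ)) / (L : ℂ) ^ 2) *
        Complex.exp (Complex.I * ((n : ℂ) + (L : ℂ)) * (t : ℂ)) +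
      (Complex.I * ((L : ℂ) + 2 * (n : ℂ)) / (2 * (L : ℂ) ^ 2)) *
        Complex.exp (Complex.I * ((n : ℂ) + 2 * (L : ℂ)) * (t : ℂ)))
    (hv₃ : ∀ (n : ℤ) (t : ℝ), v₃ n t =
      (-1 / (2 * (L : ℂ) ^ 2)) * Complex.exp (Complex.I * (n : ℂ) * (t : ℂ)) +
      (1 / (L : ℂ) ^ 2) * Complex.exp (Complex.I * ((n : ℂ) + (L : ℂ)) * (t : ℂ)) -
      (1 / (2 * (L : ℂ) ^ 2)) * Complex.exp (Complex.I * ((n : ℂ) + 2 * (L : ℂ)) * (t : ℂ)))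
    (y₁ y₂ y₃ : ℝ → ℂ)
    (hy₁ : ∀ t : ℝ, y₁ t = ∑ n ∈ Finset.Icc (-(N : ℤ)) (-(N : ℤ) + (L : ℤ) - 1), v₁ n t)
    (hy₂ : ∀ t : ℝ, y₂ t = ∑ n ∈ Finset.Icc (-(N : ℤ)) (-(N : ℤ) + (L : ℤ) - 1), v₂ n t)
    (hy₃ : ∀ t : ℝ, y₃ t = ∑ n ∈ Finset.Icc (-(N : ℤ)) (-(N : ℤ) + (L : ℤ) - 1), v₃ n t) :
    ∀ t : ℝ, f t = (1 / (L : ℂ)) * ∑ p ∈ Finset.range L,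
      (f (2 * π * p / L) * y₁ (t - 2 * π * p / L) +
       fd (2 * π * p / L) * y₂ (t - 2 * π * p / L) +
       fdd (2 * π * p / L) * y₃ (t - 2 * π * p / L)) := by
  intro t
  have hL : L ≠ 0 := by omega
  have hV₁ : ∀ k u, v₁ k u = sampleKernel₁ L k u := hv₁
  have hV₂ : ∀ k u, v₂ k u = sampleKernel₂ L k u := hv₂
  have hV₃ : ∀ k u, v₃ k u = sampleKernel₃ L k u := hv₃
  have hsample : ∀ s u : ℝ, f s * y₁ u + fd s * y₂ u + fdd s * y₃ u =
      ∑ n ∈ Icc (-(N : ℤ)) N, a n * ∑ k ∈ Icc (-(N : ℤ)) (-(N : ℤ) + L - 1),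
        expI n s * ∑ j, lagrangeBasis L (n - k) j * expI (k + (j : ℕ) * L) u := fun s u => by
    simp only [hf, hfd, hfdd, hy₁, hy₂, hy₃, sum_mul_sum, ← sum_add_distrib]
    refine sum_congr rfl fun n _ => ?_
    rw [mul_sum]
    refine sum_congr rfl fun k _ => ?_
    rw [hV₁, hV₂, hV₃, ← sampleKernel_combination]
    simp only [expI]
    ring
  have hS : Icc (-(N : ℤ)) N = Icc (-(N : ℤ)) (-(N : ℤ) + 3 * L - 1) := by congr 1; omega
  calc f t = ∑ n ∈ Icc (-(N : ℤ)) N, a n * expI n t := hf t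
    _ = ∑ n ∈ Icc (-(N : ℤ)) N, a n * ((1 / L) * ∑ p ∈ range L,
          ∑ k ∈ Icc (-(N : ℤ)) (-(N : ℤ) + L - 1), expI n (2 * π * p / L) *
            ∑ j, lagrangeBasis L (n - k) j * expI (k + (j : ℕ) * L) (t - 2 * π * p / L)) :=
        sum_congr rfl fun n hn => by rw [reconstruct_expI hL (hS ▸ hn)]
    _ = _ := by
      simp_rw [hsample, mul_sum]
      rw [sum_comm]
      simp_rw [mul_left_comm]
end

section
/- Let N be a natural number and f(t) = Σ_{n=−N}^{N} a(n) e^{int} with a(n) ∈ ℂ and a(0) = 0. Then for all t ∈ ℝ, f(t) = (1/(2N+1)) Σ_{p=0}^{2N} Hf(t_p) · y(t − t_p), where t_p = 2πp/(2N+1) and y(t) = Σ_{0<|n|≤N} i·sgn(n) e^{int}. -/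
/-!
The nodes `t_p = 2πp/(2N+1)` are the arguments of the `(2N+1)`-th roots of unity, so for
frequencies `m, n ∈ [-N, N]` the discrete orthogonality relation
`∑_p e^{i(m-n)t_p} = (2N+1) δ_{mn}` holds. Hence the sampled convolution
`(1/(2N+1)) ∑_p g(t_p) h(t - t_p)` of two trigonometric polynomials of degree `N` is the
trigonometric polynomial whose coefficients are the products of theirs. For `g = Hf` and
`h = y` these products are `(-i sgn n)(i sgn n) a(n) = a(n)` for `n ≠ 0`, and `0 = a(0)`.
-/

open Real Complex Finset

theorem IsPrimitiveRoot.geom_sum_zpow_eq_zero {K : Type*} [Field K] {ζ : K} {M : ℕ}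
    (hζ : IsPrimitiveRoot ζ M) {k : ℤ} (hk : ¬ (M : ℤ) ∣ k) :
    ∑ p ∈ range M, (ζ ^ k) ^ p = 0 := by
  have hne : ζ ^ k ≠ 1 := fun h => hk ((hζ.zpow_eq_one_iff_dvd k).1 h)
  rw [geom_sum_eq hne, ← zpow_natCast, ← zpow_mul, mul_comm, zpow_mul, hζ.zpow_eq_one,
    one_zpow, sub_self, zero_div]

theorem IsPrimitiveRoot.geom_sum_zpow_sub {K : Type*} [Field K] {ζ : K} {N : ℕ}
    (hζ : IsPrimitiveRoot ζ (2 * N + 1)) {m n : ℤ}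
    (hm : m ∈ Icc (-(N : ℤ)) N) (hn : n ∈ Icc (-(N : ℤ)) N) :
    ∑ p ∈ range (2 * N + 1), (ζ ^ (m - n)) ^ p = if m = n then (2 * N + 1 : K) else 0 := by
  split_ifs with hmn
  · simp [hmn]
  · refine hζ.geom_sum_zpow_eq_zero fun hdvd => hmn ?_
    rw [mem_Icc] at hm hn
    have : |m - n| < ((2 * N + 1 : ℕ) : ℤ) := by push_cast; rw [abs_lt]; omega
    linarith [Int.eq_zero_of_abs_lt_dvd hdvd this]

noncomputable def trigPoly (N : ℕ) (c : ℤ → ℂ) (t : ℝ) : ℂ :=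
  ∑ n ∈ Icc (-(N : ℤ)) N, c n * exp (I * n * t)

theorem sum_range_trigPoly_mul_trigPoly_sub (N : ℕ) (b c : ℤ → ℂ) (t : ℝ) :
    ∑ p ∈ range (2 * N + 1),
      trigPoly N b (2 * π * p / (2 * N + 1)) * trigPoly N c (t - 2 * π * p / (2 * N + 1)) =
    (2 * N + 1) * trigPoly N (b * c) t := by
  set ζ := exp (2 * π * I / ((2 * N + 1 : ℕ) : ℂ))
  have hζ : IsPrimitiveRoot ζ (2 * N + 1) := isPrimitiveRoot_exp _ (by omega)
  have hterm (p : ℕ) (m n : ℤ) :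
      exp (I * m * ((2 * π * p / (2 * N + 1) : ℝ) : ℂ)) *
        exp (I * n * ((t - 2 * π * p / (2 * N + 1) : ℝ) : ℂ)) =
      exp (I * n * t) * (ζ ^ (m - n)) ^ p := by
    rw [← exp_int_mul, ← Complex.exp_nat_mul, ← Complex.exp_add, ← Complex.exp_add]
    congr 1
    push_cast
    field_simp
    ring
  calc _ = ∑ m ∈ Icc (-(N : ℤ)) N, ∑ n ∈ Icc (-(N : ℤ)) N,
        b m * c n * exp (I * n * t) * ∑ p ∈ range (2 * N + 1), (ζ ^ (m - n)) ^ p := by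
        simp_rw [trigPoly, sum_mul_sum, mul_sum]
        rw [sum_comm]
        refine sum_congr rfl fun m _ => ?_
        rw [sum_comm]
        refine sum_congr rfl fun n _ => sum_congr rfl fun p _ => ?_
        linear_combination b m * c n * hterm p m n
    _ = _ := by
        rw [trigPoly, mul_sum]
        refine sum_congr rfl fun m hm => ?_
        rw [sum_congr rfl fun n hn => by rw [hζ.geom_sum_zpow_sub hm hn]]
        simp only [mul_ite, mul_zero, sum_ite_eq, if_pos hm, Pi.mul_apply]
        ring

theorem neg_I_mul_sign_mul_I_mul_sign {a : ℤ → ℂ} (ha0 : a 0 = 0) (n : ℤ) :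
    -I * n.sign * a n * (I * n.sign) = a n := by
  rcases lt_trichotomy n 0 with hn | rfl | hn
  · simp only [Int.sign_eq_neg_one_of_neg hn]
    push_cast
    linear_combination -a n * I_mul_I
  · simp [ha0]
  · simp only [Int.sign_eq_one_of_pos hn]
    push_cast
    linear_combination -a n * I_mul_I

/-- Example 3.3, formula (16): a trigonometric polynomial with zero mean is exactly
reconstructed from the samples of its circular Hilbert transform. -/
theorem reconstruction_from_hilbert_samples
    (N : ℕ) (a : ℤ → ℂ) (ha0 : a 0 = 0)
    (f Hf y : ℝ → ℂ)
    (hf : ∀ t : ℝ, f t = ∑ n ∈ Finset.Icc (-(N : ℤ)) (N : ℤ),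
      a n * Complex.exp (Complex.I * (n : ℂ) * (t : ℂ)))
    (hHf : ∀ t : ℝ, Hf t = ∑ n ∈ Finset.Icc (-(N : ℤ)) (N : ℤ),
      (-Complex.I * ((Int.sign n : ℤ) : ℂ)) * a n * Complex.exp (Complex.I * (n : ℂ) * (t : ℂ)))
    (hy : ∀ t : ℝ, y t = ∑ n ∈ (Finset.Icc (-(N : ℤ)) (N : ℤ)).erase 0,
      Complex.I * ((Int.sign n : ℤ) : ℂ) * Complex.exp (Complex.I * (n : ℂ) * (t : ℂ))) :
    ∀ t : ℝ, f t = (1 / (2 * (N : ℂ) + 1)) * ∑ p ∈ Finset.range (2 * N + 1),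
      Hf (2 * π * p / (2 * N + 1)) * y (t - 2 * π * p / (2 * N + 1)) := by
  intro t
  have hHf' : Hf = trigPoly N fun n => -I * n.sign * a n := funext hHf
  have hy' : y = trigPoly N fun n => I * n.sign :=
    funext fun s => (hy s).trans (sum_erase _ (by simp))
  have hcoef : ((fun n : ℤ => -I * n.sign * a n) * fun n => I * n.sign) = a :=
    funext (neg_I_mul_sign_mul_I_mul_sign ha0)
  have hM : (2 * N + 1 : ℂ) ≠ 0 := by exact_mod_cast (2 * N).succ_ne_zero
  rw [hHf', hy', sum_range_trigPoly_mul_trigPoly_sub, hcoef, one_div, inv_mul_cancel_left₀ hM,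
    hf, trigPoly]
end

section
/- Let N be a natural number and f(t) = Σ_{n=−N}^{N} a(n) e^{int} with a(n) ∈ ℂ. Then for all t ∈ ℝ, f(t) + i·Hf(t) = (1/(N+1)) Σ_{p=0}^{N} ( f(t_p) + i·Hf(t_p) ) · y(t − t_p), where t_p = 2πp/(N+1) and y(t) = Σ_{n=0}^{N} e^{int}. -/
/-!
At the nodes `t_p = 2πp/(N+1)` the exponentials `e^{int}`, `0 ≤ n ≤ N`, become the characters of
`ℤ/(N+1)`, so `∑_p e^{i(n-m)t_p} = (N+1) δ_{nm}`; hence a trigonometric polynomial with frequencies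
in `{0, …, N}` is recovered from its `N+1` samples through the kernel `y`. The analytic signal
`f + i·Hf` is such a polynomial, because its `n`-th coefficient is `(1 + sgn n) a(n)`.
-/

open Real Finset
open Complex (I)

theorem sum_range_exp_mul_two_pi_div {M : ℕ} (hM : M ≠ 0) {k : ℤ} (hk : |k| < M) :
    ∑ p ∈ range M, Complex.exp (I * k * (2 * π * p / M)) = if k = 0 then (M : ℂ) else 0 := by
  have hζ := Complex.isPrimitiveRoot_exp M hM
  set ζ := Complex.exp (2 * π * I / M)
  have hpow : ∀ p : ℕ, Complex.exp (I * k * (2 * π * p / M)) = (ζ ^ k) ^ p := by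
    intro p
    rw [← zpow_natCast, ← zpow_mul, ← Complex.exp_int_mul]
    push_cast
    ring_nf
  simp only [hpow]
  split_ifs with hk0
  · simp [hk0]
  · have hne : ζ ^ k ≠ 1 := fun h ↦ hk0 (Int.eq_zero_of_abs_lt_dvd ((hζ.zpow_eq_one_iff_dvd k).1 h) hk)
    have hζk_pow : (ζ ^ k) ^ M = 1 := by
      rw [← zpow_natCast, ← zpow_mul, mul_comm, zpow_mul, zpow_natCast, hζ.pow_eq_one, one_zpow]
    rw [geom_sum_eq hne, hζk_pow, sub_self, zero_div]

theorem sum_Icc_neg_eq_sum_range {β : Type*} [AddCommMonoid β] (N : ℕ) {g : ℤ → β}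
    (hg : ∀ n < 0, g n = 0) : ∑ n ∈ Icc (-(N : ℤ)) N, g n = ∑ m ∈ range (N + 1), g m := by
  rw [← sum_subset (Icc_subset_Icc (by omega : -(N : ℤ) ≤ 0) le_rfl)
    (fun n hn hn' ↦ hg n (by simp only [mem_Icc] at hn hn'; omega))]
  refine sum_nbij' Int.toNat Nat.cast ?_ ?_ ?_ ?_ ?_ <;> intros <;> simp_all

theorem interpolation_of_eq_sum_range_exp {N : ℕ} {c : ℕ → ℂ} {g y : ℝ → ℂ}
    (hg : ∀ t : ℝ, g t = ∑ n ∈ range (N + 1), c n * Complex.exp (I * n * t))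
    (hy : ∀ t : ℝ, y t = ∑ n ∈ range (N + 1), Complex.exp (I * n * t)) (t : ℝ) :
    g t = (1 / ((N : ℂ) + 1)) * ∑ p ∈ range (N + 1),
      g (2 * π * p / (N + 1)) * y (t - 2 * π * p / (N + 1)) := by
  have hN : ((N : ℂ) + 1) ≠ 0 := by exact_mod_cast N.succ_ne_zero
  have hshift : ∀ n m p : ℕ,
      Complex.exp (I * n * ((2 * π * p / (N + 1) : ℝ) : ℂ)) *
        Complex.exp (I * m * ((t - 2 * π * p / (N + 1) : ℝ) : ℂ)) =
      Complex.exp (I * m * t) * Complex.exp (I * (n - m : ℤ) * (2 * π * p / (N + 1 : ℕ))) := by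
    intro n m p
    rw [← Complex.exp_add, ← Complex.exp_add]
    push_cast
    ring_nf
  have horth : ∀ n ∈ range (N + 1), ∀ m ∈ range (N + 1),
      ∑ p ∈ range (N + 1), Complex.exp (I * (n - m : ℤ) * (2 * π * p / (N + 1 : ℕ))) =
        if n = m then (N : ℂ) + 1 else 0 := by
    intro n hn m hm
    rw [mem_range] at hn hm
    rw [sum_range_exp_mul_two_pi_div N.succ_ne_zero (abs_sub_lt_iff.2 ⟨by omega, by omega⟩)]
    simp [sub_eq_zero]
  calc g t = ∑ n ∈ range (N + 1), ∑ m ∈ range (N + 1),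
        c n * Complex.exp (I * m * t) * if n = m then 1 else 0 := by
        rw [hg]
        exact sum_congr rfl fun n hn ↦ by simp [hn]
    _ = (1 / ((N : ℂ) + 1)) * ∑ n ∈ range (N + 1), ∑ m ∈ range (N + 1),
        c n * Complex.exp (I * m * t) *
          ∑ p ∈ range (N + 1), Complex.exp (I * (n - m : ℤ) * (2 * π * p / (N + 1 : ℕ))) := by
        rw [mul_sum]
        refine sum_congr rfl fun n hn ↦ ?_
        rw [mul_sum]
        refine sum_congr rfl fun m hm ↦ ?_
        rw [horth n hn m hm]
        split_ifs <;> field_simp; ring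
    _ = _ := by
        congr 1
        simp only [hg, hy, sum_mul_sum]
        simp only [mul_sum]
        symm
        rw [sum_comm]
        refine sum_congr rfl fun n _ ↦ ?_
        rw [sum_comm]
        refine sum_congr rfl fun m _ ↦ sum_congr rfl fun p _ ↦ ?_
        rw [mul_assoc, hshift, ← mul_assoc]

theorem analytic_signal_eq_sum_range {N : ℕ} {a : ℤ → ℂ} {f Hf : ℝ → ℂ}
    (hf : ∀ t : ℝ, f t = ∑ n ∈ Icc (-(N : ℤ)) N, a n * Complex.exp (I * n * t))
    (hHf : ∀ t : ℝ, Hf t = ∑ n ∈ Icc (-(N : ℤ)) N,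
      (-I * (Int.sign n : ℂ)) * a n * Complex.exp (I * n * t)) (t : ℝ) :
    f t + I * Hf t =
      ∑ n ∈ range (N + 1), (1 + Int.sign (n : ℤ)) * a n * Complex.exp (I * n * t) := by
  have hterm : ∀ n : ℤ, a n * Complex.exp (I * n * t) +
      I * ((-I * (Int.sign n : ℂ)) * a n * Complex.exp (I * n * t)) =
        (1 + Int.sign n) * a n * Complex.exp (I * n * t) := fun n ↦ by
    linear_combination (-(Int.sign n : ℂ) * a n * Complex.exp (I * n * t)) * Complex.I_mul_I
  rw [hf, hHf, mul_sum, ← sum_add_distrib, sum_congr rfl fun n _ ↦ hterm n,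
    sum_Icc_neg_eq_sum_range N fun n hn ↦ by simp [Int.sign_eq_neg_one_of_neg hn]]
  simp only [Int.cast_natCast]

/-- Example 3.4: interpolation of the analytic signal `f + i·Hf` of a trigonometric
polynomial from its `N+1` equispaced samples. -/
theorem analytic_signal_interpolation
    (N : ℕ) (a : ℤ → ℂ)
    (f Hf y : ℝ → ℂ)
    (hf : ∀ t : ℝ, f t = ∑ n ∈ Finset.Icc (-(N : ℤ)) (N : ℤ),
      a n * Complex.exp (Complex.I * (n : ℂ) * (t : ℂ)))
    (hHf : ∀ t : ℝ, Hf t = ∑ n ∈ Finset.Icc (-(N : ℤ)) (N : ℤ),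
      (-Complex.I * ((Int.sign n : ℤ) : ℂ)) * a n * Complex.exp (Complex.I * (n : ℂ) * (t : ℂ)))
    (hy : ∀ t : ℝ, y t = ∑ n ∈ Finset.range (N + 1),
      Complex.exp (Complex.I * (n : ℂ) * (t : ℂ))) :
    ∀ t : ℝ, f t + Complex.I * Hf t = (1 / ((N : ℂ) + 1)) * ∑ p ∈ Finset.range (N + 1),
      (f (2 * π * p / (N + 1)) + Complex.I * Hf (2 * π * p / (N + 1))) *
        y (t - 2 * π * p / (N + 1)) :=
  interpolation_of_eq_sum_range_exp (analytic_signal_eq_sum_range hf hHf) hy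
end

section
/- Let N be a natural number and f(t) = Σ_{n=−N}^{N} a(n) e^{int} with a(n) ∈ ℂ, and suppose f is real-valued (f(t) ∈ ℝ for all t ∈ ℝ). Then for all t ∈ ℝ, f(t) = (1/(N+1)) Σ_{p=0}^{N} [ f(t_p) y_r(t − t_p) − Hf(t_p) y_i(t − t_p) ], where t_p = 2πp/(N+1), y_r(t) = Σ_{n=0}^{N} cos(nt) and y_i(t) = Σ_{n=0}^{N} sin(nt). -/
/-!
By linearity it suffices to treat `f = e^{imt}` with `|m| ≤ N`. Since
`cos x + i·sgn(m)·sin x` is `e^{ix}` for `m > 0`, `e^{-ix}` for `m < 0` and their average for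
`m = 0`, the `p`-th summand becomes `e^{imt_p} Σₙ e^{±in(t - t_p)}`. Summing over `p` first,
the orthogonality of the `(N+1)`-st roots of unity `e^{it_p}` keeps only the term `n = ±m`,
which is `(N+1)·e^{imt}`.
-/

open Real Finset

noncomputable def samplePoint (N p : ℕ) : ℝ := 2 * π * p / (N + 1)

theorem exp_I_mul_samplePoint (N p : ℕ) (k : ℤ) :
    Complex.exp (Complex.I * k * samplePoint N p) =
      (Complex.exp (2 * π * Complex.I / (N + 1 : ℕ)) ^ k) ^ p := by
  rw [← zpow_natCast, ← zpow_mul, ← Complex.exp_int_mul]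
  congr 1
  simp only [samplePoint]
  push_cast
  ring

theorem sum_exp_I_mul_samplePoint (N : ℕ) (k : ℤ) :
    ∑ p ∈ range (N + 1), Complex.exp (Complex.I * k * samplePoint N p) =
      if (N + 1 : ℤ) ∣ k then (N + 1 : ℂ) else 0 := by
  have hζ := Complex.isPrimitiveRoot_exp (N + 1) N.succ_ne_zero
  simp_rw [exp_I_mul_samplePoint]
  generalize Complex.exp (2 * π * Complex.I / (N + 1 : ℕ)) = ζ at hζ ⊢
  split_ifs with hk
  · simp [(hζ.zpow_eq_one_iff_dvd k).2 (mod_cast hk)]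
  · have hne : ζ ^ k ≠ 1 := fun h => hk (mod_cast (hζ.zpow_eq_one_iff_dvd k).1 h)
    rw [geom_sum_eq hne, ← zpow_natCast, ← zpow_mul, mul_comm, zpow_mul, zpow_natCast,
      hζ.pow_eq_one, one_zpow, sub_self, zero_div]

theorem sum_exp_I_mul_samplePoint_of_abs_le (N : ℕ) {k : ℤ} (hk : |k| ≤ N) :
    ∑ p ∈ range (N + 1), Complex.exp (Complex.I * k * samplePoint N p) =
      if k = 0 then (N + 1 : ℂ) else 0 := by
  rw [sum_exp_I_mul_samplePoint]
  congr 1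
  exact propext ⟨fun h => Int.eq_zero_of_abs_lt_dvd h (by omega), fun h => h ▸ dvd_zero _⟩

theorem sum_exp_samplePoint_mul_sum_exp (N : ℕ) (σ : ℤˣ) (t : ℝ) {m : ℤ}
    (h0 : 0 ≤ σ * m) (hN : σ * m ≤ N) :
    ∑ p ∈ range (N + 1), Complex.exp (Complex.I * m * samplePoint N p) *
        ∑ n ∈ range (N + 1), Complex.exp (Complex.I * (σ * (n * (t - samplePoint N p)))) =
      (N + 1) * Complex.exp (Complex.I * m * t) := by
  have hσ : (σ : ℤ) * σ = 1 := Int.units_coe_mul_self σ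
  have hterm : ∀ p n : ℕ, Complex.exp (Complex.I * m * samplePoint N p) *
      Complex.exp (Complex.I * (σ * (n * (t - samplePoint N p)))) =
      Complex.exp (Complex.I * (σ * n * t)) *
        Complex.exp (Complex.I * ((m - σ * n : ℤ) : ℂ) * samplePoint N p) := by
    intro p n
    rw [← Complex.exp_add, ← Complex.exp_add]
    push_cast
    ring_nf
  have hsum : ∀ n ∈ range (N + 1),
      ∑ p ∈ range (N + 1), Complex.exp (Complex.I * ((m - σ * n : ℤ) : ℂ) * samplePoint N p) =
        if (n : ℤ) = σ * m then (N + 1 : ℂ) else 0 := by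
    intro n hn
    have hn := mem_range.1 hn
    have hsub : m - σ * n = σ * (σ * m - n) := by rw [mul_sub, ← mul_assoc, hσ, one_mul]
    have habs : |m - σ * n| ≤ N := by
      rw [hsub, abs_mul, Int.isUnit_iff_abs_eq.1 σ.isUnit, one_mul, abs_le]
      omega
    rw [sum_exp_I_mul_samplePoint_of_abs_le N habs, hsub]
    simp only [mul_eq_zero, Units.ne_zero, false_or, sub_eq_zero, eq_comm]
  calc _ = ∑ n ∈ range (N + 1), Complex.exp (Complex.I * (σ * n * t)) *
        ∑ p ∈ range (N + 1), Complex.exp (Complex.I * ((m - σ * n : ℤ) : ℂ) * samplePoint N p) := by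
        simp_rw [mul_sum, hterm]
        exact sum_comm
    _ = Complex.exp (Complex.I * (σ * (σ * m).toNat * t)) * (N + 1) := by
        rw [sum_eq_single_of_mem (σ * m).toNat (mem_range.2 (by omega))]
        · rw [hsum _ (mem_range.2 (by omega)), if_pos (by omega)]
        · intro n hn hne
          rw [hsum n hn, if_neg (by omega), mul_zero]
    _ = _ := by
        have hσm : ((σ : ℤ) : ℂ) * (((σ * m).toNat : ℕ) : ℂ) = m := by
          rw [← Int.cast_natCast, Int.toNat_of_nonneg h0, ← Int.cast_mul, ← mul_assoc, hσ, one_mul]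
        rw [hσm, mul_comm, mul_assoc]

theorem cos_add_I_mul_sin (s z : ℂ) :
    Complex.cos z + Complex.I * s * Complex.sin z =
      (1 + s) / 2 * Complex.exp (Complex.I * z) + (1 - s) / 2 * Complex.exp (-(Complex.I * z)) := by
  rw [Complex.cos, Complex.sin]
  ring_nf
  rw [Complex.I_sq]
  ring_nf

theorem sum_exp_samplePoint_mul_sum_cos_add_sign_mul_sin (N : ℕ) {m : ℤ}
    (hm : m ∈ Icc (-N : ℤ) N) (t : ℝ) :
    ∑ p ∈ range (N + 1), Complex.exp (Complex.I * m * samplePoint N p) *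
        ∑ n ∈ range (N + 1), (Complex.cos (n * (t - samplePoint N p)) +
          Complex.I * (m.sign : ℂ) * Complex.sin (n * (t - samplePoint N p))) =
      (N + 1) * Complex.exp (Complex.I * m * t) := by
  obtain ⟨hlo, hhi⟩ := mem_Icc.1 hm
  have hplus := sum_exp_samplePoint_mul_sum_exp N 1 t (m := m)
  have hminus := sum_exp_samplePoint_mul_sum_exp N (-1) t (m := m)
  simp only [Units.val_one, Units.val_neg, Int.cast_one, Int.cast_neg, one_mul, neg_one_mul,
    mul_neg] at hplus hminus
  simp_rw [cos_add_I_mul_sin, sum_add_distrib, ← mul_sum, mul_add, sum_add_distrib,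
    mul_left_comm _ ((1 + (m.sign : ℂ)) / 2), mul_left_comm _ ((1 - (m.sign : ℂ)) / 2), ← mul_sum]
  rcases lt_trichotomy m 0 with hneg | rfl | hpos
  · rw [Int.sign_eq_neg_one_of_neg hneg, hminus (by omega) (by omega)]
    norm_num
  · rw [hplus le_rfl (by omega), hminus le_rfl (by omega), Int.sign_zero, Int.cast_zero]
    ring
  · rw [Int.sign_eq_one_of_pos hpos, hplus (by omega) (by omega)]
    norm_num

theorem real_signal_from_self_and_hilbert_samples_general
    (N : ℕ) (a : ℤ → ℂ)
    (f Hf : ℝ → ℂ)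
    (hf : ∀ t : ℝ, f t = ∑ n ∈ Finset.Icc (-(N : ℤ)) (N : ℤ),
      a n * Complex.exp (Complex.I * (n : ℂ) * (t : ℂ)))
    (hHf : ∀ t : ℝ, Hf t = ∑ n ∈ Finset.Icc (-(N : ℤ)) (N : ℤ),
      (-Complex.I * ((Int.sign n : ℤ) : ℂ)) * a n * Complex.exp (Complex.I * (n : ℂ) * (t : ℂ)))
    (yr yi : ℝ → ℝ)
    (hyr : ∀ t : ℝ, yr t = ∑ n ∈ Finset.range (N + 1), Real.cos (n * t))
    (hyi : ∀ t : ℝ, yi t = ∑ n ∈ Finset.range (N + 1), Real.sin (n * t)) :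
    ∀ t : ℝ, f t = (1 / ((N : ℂ) + 1)) * ∑ p ∈ Finset.range (N + 1),
      (f (2 * π * p / (N + 1)) * ((yr (t - 2 * π * p / (N + 1)) : ℝ) : ℂ) -
       Hf (2 * π * p / (N + 1)) * ((yi (t - 2 * π * p / (N + 1)) : ℝ) : ℂ)) := by
  intro t
  have hN : (N : ℂ) + 1 ≠ 0 := by exact_mod_cast N.succ_ne_zero
  change _ = _ * ∑ p ∈ range (N + 1), (f (samplePoint N p) * (yr (t - samplePoint N p) : ℂ) -
    Hf (samplePoint N p) * (yi (t - samplePoint N p) : ℂ))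
  rw [one_div, eq_inv_mul_iff_mul_eq₀ hN, eq_comm]
  calc _ = ∑ p ∈ range (N + 1), ∑ m ∈ Icc (-N : ℤ) N, a m *
        (Complex.exp (Complex.I * m * samplePoint N p) *
          ∑ n ∈ range (N + 1), (Complex.cos (n * (t - samplePoint N p)) +
            Complex.I * (m.sign : ℂ) * Complex.sin (n * (t - samplePoint N p)))) := by
        refine sum_congr rfl fun p _ => ?_
        rw [hf, hHf, hyr, hyi]
        push_cast
        rw [sum_mul, sum_mul, ← sum_sub_distrib]
        refine sum_congr rfl fun m _ => ?_
        rw [sum_add_distrib, ← mul_sum]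
        ring
    _ = ∑ m ∈ Icc (-N : ℤ) N, a m * ((N + 1) * Complex.exp (Complex.I * m * t)) := by
        rw [sum_comm]
        refine sum_congr rfl fun m hm => ?_
        rw [← mul_sum, sum_exp_samplePoint_mul_sum_cos_add_sign_mul_sin N hm]
    _ = (N + 1) * f t := by
        rw [hf, mul_sum]
        exact sum_congr rfl fun m _ => mul_left_comm _ _ _

/-- Example 3.4, formula (19): a real-valued trigonometric polynomial reconstructed
from the samples of itself and of its circular Hilbert transform. -/
theorem real_signal_from_self_and_hilbert_samples
    (N : ℕ) (a : ℤ → ℂ)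
    (f Hf : ℝ → ℂ)
    (hf : ∀ t : ℝ, f t = ∑ n ∈ Finset.Icc (-(N : ℤ)) (N : ℤ),
      a n * Complex.exp (Complex.I * (n : ℂ) * (t : ℂ)))
    (hreal : ∀ t : ℝ, (f t).im = 0)
    (hHf : ∀ t : ℝ, Hf t = ∑ n ∈ Finset.Icc (-(N : ℤ)) (N : ℤ),
      (-Complex.I * ((Int.sign n : ℤ) : ℂ)) * a n * Complex.exp (Complex.I * (n : ℂ) * (t : ℂ)))
    (yr yi : ℝ → ℝ)
    (hyr : ∀ t : ℝ, yr t = ∑ n ∈ Finset.range (N + 1), Real.cos (n * t))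
    (hyi : ∀ t : ℝ, yi t = ∑ n ∈ Finset.range (N + 1), Real.sin (n * t)) :
    ∀ t : ℝ, f t = (1 / ((N : ℂ) + 1)) * ∑ p ∈ Finset.range (N + 1),
      (f (2 * π * p / (N + 1)) * ((yr (t - 2 * π * p / (N + 1)) : ℝ) : ℂ) -
       Hf (2 * π * p / (N + 1)) * ((yi (t - 2 * π * p / (N + 1)) : ℝ) : ℂ)) :=
  real_signal_from_self_and_hilbert_samples_general N a f Hf hf hHf yr yi hyr hyi
end

section
/- Under the MCI setup with H_n invertible for every n ∈ I_1, let a : ℤ → ℂ satisfy Σ_{n∈ℤ} |a(n) b_m(n)| < ∞ for each m = 1,…,M, and define the channel outputs g_m(t) = Σ_{n∈ℤ} a(n) b_m(n) e^{int}. Let c : ℤ → ℂ be the Fourier coefficients of the interpolant T_N f, i.e. c(n) = (1/L) Σ_{j=1}^{M} Σ_{p=0}^{L−1} g_j(t_p) e^{−in t_p} r_j(n) for n ∈ I^N and c(n) = 0 for n ∉ I^N. Then the interpolation is consistent: for every m ∈ {1,…,M} and every k ∈ ℤ, Σ_{n∈I^N} c(n) b_m(n) e^{in·2πk/L} = g_m(2πk/L);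 that is, filtering the interpolant through the m-th channel and resampling reproduces the original samples g_m(2πk/L). -/
/-!
With `ζ = e^{2πi/L}`, substituting `c` turns the left side into
`(1/L) ∑_j ∑_p g_j(t_p) ∑_n r_j(n) b_m(n) ζ^{n(k-p)}`. Writing `n = N₁ + u + κL`, the power of `ζ`
depends only on `u`, and the sum over `κ` is the `(j, m)` entry of `H⁻¹ H = 1`; what is left of the
sum over `u` is a sum of `L`-th roots of unity, equal to `L` if `L ∣ k - p` and to `0` otherwise.
Hence only `j = m`, `p ≡ k (mod L)` survives, and `g_m(2πp/L)` is `L`-periodic in `p`.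
-/

open Real Finset

theorem Int.sum_Icc_eq_sum_sum_add_mul {β : Type*} [AddCommMonoid β] {N₁ N₂ : ℤ} {L M : ℕ}
    (h : N₂ - N₁ + 1 = L * M) (f : ℤ → β) :
    ∑ n ∈ Icc N₁ N₂, f n = ∑ κ : Fin M, ∑ u : Fin L, f (N₁ + u + κ * L) := by
  have hcard : (N₂ + 1 - N₁).toNat = M * L := by rw [mul_comm]; omega
  rw [Int.Icc_eq_finset_map, sum_map, hcard, ← Fin.sum_univ_eq_sum_range,
    ← finProdFinEquiv.sum_comp, Fintype.sum_prod_type]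
  refine sum_congr rfl fun κ _ => sum_congr rfl fun u _ => congrArg f ?_
  simp only [finProdFinEquiv_apply_val, Function.Embedding.trans_apply, Nat.castEmbedding_apply,
    addLeftEmbedding_apply]
  push_cast
  ring

theorem IsPrimitiveRoot.sum_range_zpow_add_mul {K : Type*} [Field K] {ζ : K} {L : ℕ}
    (hζ : IsPrimitiveRoot ζ L) (N d : ℤ) :
    ∑ u ∈ range L, ζ ^ ((N + u) * d) = if (L : ℤ) ∣ d then (L : K) else 0 := by
  obtain rfl | hL := eq_or_ne L 0
  · simp
  split_ifs with hd
  · have hterm (u : ℕ) : ζ ^ ((N + u) * d) = 1 :=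
      (hζ.zpow_eq_one_iff_dvd _).mpr (hd.mul_left _)
    simp [hterm]
  · have hζ0 : ζ ≠ 0 := hζ.ne_zero hL
    have hterm (u : ℕ) : ζ ^ ((N + u) * d) = ζ ^ (N * d) * (ζ ^ d) ^ u := by
      rw [← zpow_natCast, ← zpow_mul, ← zpow_add₀ hζ0]
      ring_nf
    have hne : ζ ^ d ≠ 1 := fun h => hd ((hζ.zpow_eq_one_iff_dvd d).mp h)
    have hpow : (ζ ^ d) ^ L = 1 := by
      rw [← zpow_natCast, ← zpow_mul, mul_comm, zpow_mul, zpow_natCast, hζ.pow_eq_one, one_zpow]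
    simp_rw [hterm, ← mul_sum, geom_sum_eq hne, hpow, sub_self, zero_div, mul_zero]

theorem IsPrimitiveRoot.zpow_add_mul_eq {G₀ : Type*} [CommGroupWithZero G₀] {ζ : G₀} {L : ℕ}
    (hζ : IsPrimitiveRoot ζ L) (a q : ℤ) : ζ ^ (a + L * q) = ζ ^ a := by
  obtain rfl | hL := eq_or_ne L 0
  · simp
  rw [zpow_add₀ (hζ.ne_zero hL), zpow_mul, zpow_natCast, hζ.pow_eq_one, one_zpow, mul_one]

theorem sum_Icc_mul_zpow_of_sum_block_eq {K : Type*} [Field K] {ζ : K} {N₁ N₂ : ℤ} {L M : ℕ}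
    (hζ : IsPrimitiveRoot ζ L) (h : N₂ - N₁ + 1 = L * M) {F : ℤ → K} {s : K}
    (hF : ∀ u : Fin L, ∑ κ : Fin M, F (N₁ + u + κ * L) = s) (d : ℤ) :
    ∑ n ∈ Icc N₁ N₂, F n * ζ ^ (n * d) = s * if (L : ℤ) ∣ d then (L : K) else 0 := by
  have hperiod (u : Fin L) (κ : Fin M) : ζ ^ ((N₁ + u + κ * L) * d) = ζ ^ ((N₁ + u) * d) := by
    rw [show (N₁ + u + κ * L) * d = (N₁ + u) * d + L * (κ * d) by ring, hζ.zpow_add_mul_eq]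
  rw [Int.sum_Icc_eq_sum_sum_add_mul h, sum_comm, ← hζ.sum_range_zpow_add_mul N₁, mul_sum,
    ← Fin.sum_univ_eq_sum_range]
  refine sum_congr rfl fun u _ => ?_
  simp_rw [hperiod, ← sum_mul, hF]

theorem Matrix.sum_block_inv_mul_eq_one_apply {K : Type*} [CommRing K] {M L : ℕ}
    {b r : Fin M → ℤ → K} {A : Matrix (Fin M) (Fin M) K} {ν : ℤ} {j : Fin M}
    (hA : A = Matrix.of fun i k : Fin M => b k (ν + (i : ℤ) * L)) (hunit : IsUnit A)
    (hr : ∀ k : Fin M, r j (ν + (k : ℤ) * L) = A⁻¹ j k) (m : Fin M) :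
    ∑ κ : Fin M, r j (ν + (κ : ℤ) * L) * b m (ν + (κ : ℤ) * L) = if j = m then 1 else 0 := by
  rw [← Matrix.one_apply, ← Matrix.nonsing_inv_mul A ((Matrix.isUnit_iff_isUnit_det A).mp hunit),
    Matrix.mul_apply]
  simp_rw [hr, hA, Matrix.of_apply]

theorem Function.Periodic.sum_range_ite_dvd_sub {β : Type*} [AddCommMonoid β] {f : ℤ → β}
    {L : ℕ} (hf : Periodic f L) (hL : 0 < L) (k : ℤ) :
    ∑ p ∈ range L, (if (L : ℤ) ∣ k - p then f p else 0) = f k := by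
  have hLZ : (0 : ℤ) < L := by exact_mod_cast hL
  have h0 := Int.emod_nonneg k hLZ.ne'
  have h1 := Int.emod_lt_of_pos k hLZ
  have hmod : ∀ p < L, (L : ℤ) ∣ k - p ↔ p = (k % L).toNat := by
    intro p hp
    rw [← Int.modEq_iff_dvd, Int.ModEq, Int.emod_eq_of_lt (by omega) (by omega)]
    omega
  rw [sum_eq_single_of_mem (k % L).toNat (mem_range.mpr (by omega)) fun p hp hne => if_neg ?_,
    if_pos ((hmod _ (by omega)).mpr rfl)]
  · have hk : ((k % L).toNat : ℤ) = k - (k / L : ℤ) * L := by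
      rw [Int.toNat_of_nonneg h0, Int.emod_def]
      ring
    rw [hk]
    exact hf.sub_int_mul_eq (k / L)
  · exact fun hdvd => hne ((hmod p (mem_range.mp hp)).mp hdvd)

theorem Complex.exp_I_mul_two_pi_div (L : ℕ) (n k : ℤ) :
    exp (I * n * ((2 * π * k / L : ℝ) : ℂ)) = exp (2 * π * I / L) ^ (n * k) := by
  rw [← exp_int_mul]
  congr 1
  push_cast
  ring

theorem Complex.exp_neg_I_mul_two_pi_div_mul_exp (L : ℕ) (n p k : ℤ) :
    exp (-I * n * ((2 * π * p / L : ℝ) : ℂ)) * exp (I * n * ((2 * π * k / L : ℝ) : ℂ)) =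
      exp (2 * π * I / L) ^ (n * (k - p)) := by
  rw [neg_mul, neg_mul, exp_neg, exp_I_mul_two_pi_div, exp_I_mul_two_pi_div, ← zpow_neg,
    ← zpow_add₀ (exp_ne_zero _)]
  ring_nf

theorem Complex.periodic_tsum_mul_exp_I_mul_two_pi_div (L : ℕ) (f : ℤ → ℂ) :
    Function.Periodic (fun k : ℤ => ∑' n : ℤ, f n * exp (I * n * ((2 * π * k / L : ℝ) : ℂ))) L := by
  obtain rfl | hL := eq_or_ne L 0
  · simp
  intro k
  refine tsum_congr fun n => ?_
  simp only [exp_I_mul_two_pi_div]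
  rw [show n * (k + L) = n * k + L * n by ring, (isPrimitiveRoot_exp L hL).zpow_add_mul_eq]

theorem mci_interpolation_consistency_general
    (N₁ N₂ : ℤ) (M L : ℕ) (hL : 0 < L)
    (hNML : N₂ - N₁ + 1 = (L : ℤ) * (M : ℤ))
    (b : Fin M → ℤ → ℂ)
    (H : ℤ → Matrix (Fin M) (Fin M) ℂ)
    (hH : ∀ n : ℤ, H n = Matrix.of fun j k : Fin M => b k (n + (j : ℤ) * (L : ℤ)))
    (hinv : ∀ n : ℤ, N₁ ≤ n → n ≤ N₁ + (L : ℤ) - 1 → IsUnit (H n))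
    (r : Fin M → ℤ → ℂ)
    (hr1 : ∀ (m : Fin M) (n : ℤ), N₁ ≤ n → n ≤ N₁ + (L : ℤ) - 1 →
      ∀ k : Fin M, r m (n + (k : ℤ) * (L : ℤ)) = (H n)⁻¹ m k)
    (a : ℤ → ℂ)
    (g : Fin M → ℝ → ℂ)
    (hg : ∀ (m : Fin M) (t : ℝ),
      g m t = ∑' n : ℤ, a n * b m n * Complex.exp (Complex.I * (n : ℂ) * (t : ℂ)))
    (c : ℤ → ℂ)
    (hc1 : ∀ n ∈ Finset.Icc N₁ N₂,
      c n = (1 / (L : ℂ)) * ∑ j : Fin M, ∑ p ∈ Finset.range L,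
        g j (2 * π * p / L) * Complex.exp (-Complex.I * (n : ℂ) * ((2 * π * p / L : ℝ) : ℂ)) *
          r j n) :
    ∀ (m : Fin M) (k : ℤ),
      ∑ n ∈ Finset.Icc N₁ N₂,
        c n * b m n * Complex.exp (Complex.I * (n : ℂ) * ((2 * π * k / L : ℝ) : ℂ)) =
      g m (2 * π * k / L) := by
  intro m k
  set ζ := Complex.exp (2 * π * Complex.I / L)
  have hζ : IsPrimitiveRoot ζ L := Complex.isPrimitiveRoot_exp L hL.ne'
  have hblock (j : Fin M) (u : Fin L) :
      ∑ κ : Fin M, r j (N₁ + u + κ * L) * b m (N₁ + u + κ * L) = if j = m then 1 else 0 :=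
    Matrix.sum_block_inv_mul_eq_one_apply (hH _) (hinv _ (by omega) (by omega))
      (hr1 j _ (by omega) (by omega)) m
  have hper : Function.Periodic (fun k : ℤ => g m (2 * π * k / L)) L := by
    simpa only [hg] using Complex.periodic_tsum_mul_exp_I_mul_two_pi_div L fun n => a n * b m n
  calc _ = ∑ j, ∑ p ∈ range L, g j (2 * π * p / L) / L *
          ∑ n ∈ Icc N₁ N₂, r j n * b m n * ζ ^ (n * (k - p)) := by
        have hexp (n : ℤ) (p : ℕ) : Complex.exp (-Complex.I * n * ((2 * π * p / L : ℝ) : ℂ)) *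
            Complex.exp (Complex.I * n * ((2 * π * k / L : ℝ) : ℂ)) = ζ ^ (n * (k - p)) := by
          simpa only [Int.cast_natCast] using Complex.exp_neg_I_mul_two_pi_div_mul_exp L n p k
        rw [sum_congr rfl fun n hn => by rw [hc1 n hn]]
        simp_rw [mul_sum, sum_mul]
        rw [sum_comm]
        refine sum_congr rfl fun j _ => ?_
        rw [sum_comm]
        refine sum_congr rfl fun p _ => sum_congr rfl fun n _ => ?_
        rw [← hexp]
        ring
    _ = ∑ j, ∑ p ∈ range L, g j (2 * π * p / L) / L *
          ((if j = m then 1 else 0) * if (L : ℤ) ∣ k - p then (L : ℂ) else 0) := by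
        refine sum_congr rfl fun j _ => sum_congr rfl fun p _ => congrArg _ ?_
        exact sum_Icc_mul_zpow_of_sum_block_eq (F := fun n => r j n * b m n) hζ hNML (hblock j) _
    _ = ∑ p ∈ range L, if (L : ℤ) ∣ k - p then g m (2 * π * (p : ℤ) / L) else 0 := by
        rw [Fintype.sum_eq_single m fun j hj => by simp [hj]]
        refine sum_congr rfl fun p _ => ?_
        simp only [if_true, one_mul, Int.cast_natCast]
        split_ifs <;> simp [hL.ne']
    _ = g m (2 * π * k / L) := hper.sum_range_ite_dvd_sub hL k

/-- Theorem 4.1 (interpolation consistency): for a not necessarily bandlimited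
signal with Fourier coefficients `a`, filtering the MCI interpolant `T_N f`
through the `m`-th channel and resampling at the points `2πk/L` reproduces the
original samples `g_m(2πk/L)`. -/
theorem mci_interpolation_consistency
    (N₁ N₂ : ℤ) (M L : ℕ) (hM : 0 < M) (hL : 0 < L)
    (hNML : N₂ - N₁ + 1 = (L : ℤ) * (M : ℤ))
    (b : Fin M → ℤ → ℂ)
    (H : ℤ → Matrix (Fin M) (Fin M) ℂ)
    (hH : ∀ n : ℤ, H n = Matrix.of fun j k : Fin M => b k (n + (j : ℤ) * (L : ℤ)))
    (hinv : ∀ n : ℤ, N₁ ≤ n → n ≤ N₁ + (L : ℤ) - 1 → IsUnit (H n))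
    (r : Fin M → ℤ → ℂ)
    (hr1 : ∀ (m : Fin M) (n : ℤ), N₁ ≤ n → n ≤ N₁ + (L : ℤ) - 1 →
      ∀ k : Fin M, r m (n + (k : ℤ) * (L : ℤ)) = (H n)⁻¹ m k)
    (hr0 : ∀ (m : Fin M) (n : ℤ), n < N₁ ∨ N₂ < n → r m n = 0)
    (a : ℤ → ℂ)
    (hsum : ∀ m : Fin M, Summable fun n : ℤ => ‖a n * b m n‖)
    (g : Fin M → ℝ → ℂ)
    (hg : ∀ (m : Fin M) (t : ℝ),
      g m t = ∑' n : ℤ, a n * b m n * Complex.exp (Complex.I * (n : ℂ) * (t : ℂ)))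
    (c : ℤ → ℂ)
    (hc1 : ∀ n ∈ Finset.Icc N₁ N₂,
      c n = (1 / (L : ℂ)) * ∑ j : Fin M, ∑ p ∈ Finset.range L,
        g j (2 * π * p / L) * Complex.exp (-Complex.I * (n : ℂ) * ((2 * π * p / L : ℝ) : ℂ)) *
          r j n)
    (hc0 : ∀ n : ℤ, n ∉ Finset.Icc N₁ N₂ → c n = 0) :
    ∀ (m : Fin M) (k : ℤ),
      ∑ n ∈ Finset.Icc N₁ N₂,
        c n * b m n * Complex.exp (Complex.I * (n : ℂ) * ((2 * π * k / L : ℝ) : ℂ)) =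
      g m (2 * π * k / L) :=
  mci_interpolation_consistency_general N₁ N₂ M L hL hNML b H hH hinv r hr1 a g hg c hc1
end

section
/- Under the MCI setup with H_n invertible for every n ∈ I_1, the functions r_m and b_m satisfy: (i) Σ_{m=1}^{M} r_m(n) b_m(n) = 1 for every n ∈ I^N; and (ii) Σ_{m=1}^{M} r_m(n₁) b_m(n₂) = 0 for all n₁, n₂ ∈ I^N such that n₁ − n₂ is a nonzero integer multiple of L. -/
/-! Every `n ∈ I^N` is uniquely `n₀ + kL` with `n₀ ∈ I_1` and `0 ≤ k < M`, and `b_m(n₀ + kL)`,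
`r_m(n₀ + kL)` are the `(k, m)` entry of `H_{n₀}` and the `(m, k)` entry of `H_{n₀}⁻¹`.
So `Σ_m r_m(n₀ + k₁L) b_m(n₀ + k₂L)` is the `(k₂, k₁)` entry of `H_{n₀} H_{n₀}⁻¹ = 1`.
Two points of `I^N` differing by a nonzero multiple of `L` share `n₀` but not `k`. -/

namespace MCI

lemma exists_eq_add_mul_of_mem_Icc {N₁ n : ℤ} {L M : ℕ}
    (h₁ : N₁ ≤ n) (h₂ : n ≤ N₁ + L * M - 1) :
    ∃ (n₀ : ℤ) (k : Fin M), N₁ ≤ n₀ ∧ n₀ ≤ N₁ + L - 1 ∧ n = n₀ + k * L := by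
  have hL : (0 : ℤ) < L := by
    rcases Nat.eq_zero_or_pos L with h | h
    · subst h; omega
    · exact_mod_cast h
  have hq : 0 ≤ (n - N₁) / L := Int.ediv_nonneg (by omega) hL.le
  have hqM : (n - N₁) / L < M := by
    rw [Int.ediv_lt_iff_lt_mul hL]; linarith
  refine ⟨N₁ + (n - N₁) % L, ⟨((n - N₁) / L).toNat, by omega⟩, ?_, ?_, ?_⟩
  · have := Int.emod_nonneg (n - N₁) hL.ne'; omega
  · have := Int.emod_lt_of_pos (n - N₁) hL; omega
  · have := Int.mul_ediv_add_emod (n - N₁) L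
    simp only [Int.toNat_of_nonneg hq]
    linarith

lemma eq_and_eq_sub_of_add_mul_sub_add_mul {N₁ n₀ n₀' j k₁ k₂ L : ℤ}
    (h₀ : N₁ ≤ n₀) (h₀' : n₀ ≤ N₁ + L - 1) (h₁ : N₁ ≤ n₀') (h₁' : n₀' ≤ N₁ + L - 1)
    (h : n₀ + k₁ * L - (n₀' + k₂ * L) = j * L) :
    n₀ = n₀' ∧ j = k₁ - k₂ := by
  have hdvd : L ∣ n₀ - n₀' := ⟨j + k₂ - k₁, by linear_combination h⟩
  have hlt : |n₀ - n₀'| < L := abs_sub_lt_iff.mpr ⟨by omega, by omega⟩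
  have hn₀ : n₀ = n₀' := sub_eq_zero.mp (Int.eq_zero_of_abs_lt_dvd hdvd hlt)
  refine ⟨hn₀, ?_⟩
  subst hn₀
  have hL : L ≠ 0 := by omega
  exact mul_right_cancel₀ hL (by linear_combination -h)

lemma sum_inv_apply_mul_apply {ι R : Type*} [Fintype ι] [DecidableEq ι] [CommRing R]
    {A : Matrix ι ι R} (hA : IsUnit A) (j k : ι) :
    ∑ m, A⁻¹ m k * A j m = (1 : Matrix ι ι R) j k := by
  rw [← Matrix.mul_nonsing_inv A ((Matrix.isUnit_iff_isUnit_det A).mp hA), Matrix.mul_apply]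
  exact Finset.sum_congr rfl fun m _ => mul_comm _ _

end MCI

open MCI in
theorem mci_rm_bm_biorthogonality_general
    (N₁ N₂ : ℤ) (M L : ℕ)
    (hNML : N₂ - N₁ + 1 = (L : ℤ) * (M : ℤ))
    (b : Fin M → ℤ → ℂ)
    (H : ℤ → Matrix (Fin M) (Fin M) ℂ)
    (hH : ∀ n : ℤ, H n = Matrix.of fun j k : Fin M => b k (n + (j : ℤ) * (L : ℤ)))
    (hinv : ∀ n : ℤ, N₁ ≤ n → n ≤ N₁ + (L : ℤ) - 1 → IsUnit (H n))
    (r : Fin M → ℤ → ℂ)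
    (hr1 : ∀ (m : Fin M) (n : ℤ), N₁ ≤ n → n ≤ N₁ + (L : ℤ) - 1 →
      ∀ k : Fin M, r m (n + (k : ℤ) * (L : ℤ)) = (H n)⁻¹ m k) :
    (∀ n ∈ Finset.Icc N₁ N₂, ∑ m : Fin M, r m n * b m n = 1) ∧
    (∀ n₁ ∈ Finset.Icc N₁ N₂, ∀ n₂ ∈ Finset.Icc N₁ N₂,
      (∃ j : ℤ, j ≠ 0 ∧ n₁ - n₂ = j * (L : ℤ)) →
      ∑ m : Fin M, r m n₁ * b m n₂ = 0) := by
  have key : ∀ n₀, N₁ ≤ n₀ → n₀ ≤ N₁ + L - 1 → ∀ k₁ k₂ : Fin M,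
      ∑ m, r m (n₀ + k₁ * L) * b m (n₀ + k₂ * L) = (1 : Matrix (Fin M) (Fin M) ℂ) k₂ k₁ := by
    intro n₀ h₀ h₀' k₁ k₂
    simp only [hr1 _ n₀ h₀ h₀', ← sum_inv_apply_mul_apply (hinv n₀ h₀ h₀'), hH, Matrix.of_apply]
  have decomp : ∀ n ∈ Finset.Icc N₁ N₂, ∃ (n₀ : ℤ) (k : Fin M),
      N₁ ≤ n₀ ∧ n₀ ≤ N₁ + L - 1 ∧ n = n₀ + k * L := fun n hn =>
    exists_eq_add_mul_of_mem_Icc (Finset.mem_Icc.mp hn).1 (by linarith [(Finset.mem_Icc.mp hn).2])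
  refine ⟨fun n hn => ?_, fun n₁ hn₁ n₂ hn₂ ⟨j, hj, hsub⟩ => ?_⟩
  · obtain ⟨n₀, k, h₀, h₀', rfl⟩ := decomp n hn
    rw [key n₀ h₀ h₀', Matrix.one_apply_eq]
  · obtain ⟨n₀, k₁, h₀, h₀', rfl⟩ := decomp n₁ hn₁
    obtain ⟨n₀', k₂, h₁, h₁', rfl⟩ := decomp n₂ hn₂
    obtain ⟨rfl, rfl⟩ := eq_and_eq_sub_of_add_mul_sub_add_mul h₀ h₀' h₁ h₁' hsub
    have hk : k₂ ≠ k₁ := fun hk => hj (by rw [hk, sub_self])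
    rw [key n₀ h₀ h₀', Matrix.one_apply_ne hk]

/-- Lemma 4.1: biorthogonality relations between the coefficients `r_m` and the
channel multipliers `b_m`: `Σ_m r_m(n) b_m(n) = 1` on `I^N`, and
`Σ_m r_m(n₁) b_m(n₂) = 0` whenever `n₁, n₂ ∈ I^N` differ by a nonzero multiple
of `L`. -/
theorem mci_rm_bm_biorthogonality
    (N₁ N₂ : ℤ) (M L : ℕ) (hM : 0 < M) (hL : 0 < L)
    (hNML : N₂ - N₁ + 1 = (L : ℤ) * (M : ℤ))
    (b : Fin M → ℤ → ℂ)
    (H : ℤ → Matrix (Fin M) (Fin M) ℂ)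
    (hH : ∀ n : ℤ, H n = Matrix.of fun j k : Fin M => b k (n + (j : ℤ) * (L : ℤ)))
    (hinv : ∀ n : ℤ, N₁ ≤ n → n ≤ N₁ + (L : ℤ) - 1 → IsUnit (H n))
    (r : Fin M → ℤ → ℂ)
    (hr1 : ∀ (m : Fin M) (n : ℤ), N₁ ≤ n → n ≤ N₁ + (L : ℤ) - 1 →
      ∀ k : Fin M, r m (n + (k : ℤ) * (L : ℤ)) = (H n)⁻¹ m k)
    (hr0 : ∀ (m : Fin M) (n : ℤ), n < N₁ ∨ N₂ < n → r m n = 0) :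
    (∀ n ∈ Finset.Icc N₁ N₂, ∑ m : Fin M, r m n * b m n = 1) ∧
    (∀ n₁ ∈ Finset.Icc N₁ N₂, ∀ n₂ ∈ Finset.Icc N₁ N₂,
      (∃ j : ℤ, j ≠ 0 ∧ n₁ - n₂ = j * (L : ℤ)) →
      ∑ m : Fin M, r m n₁ * b m n₂ = 0) :=
  mci_rm_bm_biorthogonality_general N₁ N₂ M L hNML b H hH hinv r hr1
end
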